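/- Let $G$ be a finite simple graph, $w$ a vertex of $G$, and $x, y$ two distinct non-adjacent vertices of $G$ both adjacent to $w$, such that $x$ and $y$ have exactly the same neighborhoods in a set $Q \subseteq V(G)$ containing $w$ but not containing $x$ or $y$. Then in the pivoted graph $G \wedge yw$, the vertex $x$ has no neighbors in $Q$ except $y$; that is, $N_{G \wedge yw}(x) \cap (Q \cup \{y\}) = \{y\}$. -/

import Mathlib

open scoped Classical

/-- Local complementation at a vertex `v`. -/
def localComp {V : Type*} (G : SimpleGraph V) (v : V) : SimpleGraph V where
  Adj x y := x ≠ y ∧ Xor' (G.Adj x y) (G.Adj v x ∧ G.Adj v y)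
  symm := by
    constructor
    intro x y ⟨hne, h⟩
    refine ⟨hne.symm, ?_⟩
    have h1 := G.adj_comm x y
    unfold Xor' at *
    rw [← h1, and_comm]
    exact h
  loopless := ⟨fun x h => h.1 rfl⟩

/-- Pivoting an edge `uv`: `G ∧ uv = G * u * v * u`. -/
def pivot {V : Type*} (G : SimpleGraph V) (u v : V) : SimpleGraph V :=
  localComp (localComp (localComp G u) v) u

/-! In the pivot `G ∧ yw`, the vertex `x` (a neighbour of `w` but not of `y`) belongs to the class
of vertices adjacent to `w` only. A vertex `z ∈ Q` adjacent to `x` is also adjacent to `y`, so it lies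
in another class and its edge to `x` is toggled away; a `z ∈ Q` adjacent to neither `x` nor `y` lies
in the class of `x` or in no class, so stays non-adjacent. Finally the pivot exchanges the roles of
`y` and `w`, so `x` becomes adjacent to `y` and not to `w`. -/

namespace SimpleGraph

variable {V : Type*} (G : SimpleGraph V) {u v : V}

theorem localComp_adj (w a b : V) :
    (localComp G w).Adj a b ↔ a ≠ b ∧ Xor (G.Adj a b) (G.Adj w a ∧ G.Adj w b) :=
  Iff.rfl

/-- Over `𝔽₂` this is the entry `A_ab + A_au A_vb + A_av A_ub` of the pivoted adjacency matrix
(including `a = b`, where the two correction terms cancel). -/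
theorem pivot_adj_iff (huv : G.Adj u v) {a b : V} (hau : a ≠ u) (hav : a ≠ v) (hbu : b ≠ u)
    (hbv : b ≠ v) :
    (pivot G u v).Adj a b ↔
      Xor (G.Adj a b) (Xor (G.Adj a u ∧ G.Adj v b) (G.Adj a v ∧ G.Adj u b)) := by
  simp only [pivot, localComp_adj, G.adj_comm a u, G.adj_comm a v, ne_eq, huv, huv.symm,
    G.loopless.irrefl, huv.symm.ne, hau.symm, hav.symm, hbu.symm, hbv.symm, not_false_eq_true,
    true_and, and_false, false_and]
  by_cases hab : a = b
  · subst hab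
    simp only [not_true_eq_false, false_and, G.loopless.irrefl a, and_comm, _root_.xor_self,
      xor_false, id]
  · simp only [hab]
    grind

theorem pivot_adj_left_iff (huv : G.Adj u v) {a : V} (hau : a ≠ u) (hav : a ≠ v) :
    (pivot G u v).Adj a u ↔ G.Adj a v := by
  simp only [pivot, localComp_adj, G.adj_comm a u, G.adj_comm a v, ne_eq, huv, huv.symm,
    G.loopless.irrefl, hau.symm, hav.symm, not_false_eq_true, true_and, and_false, false_and]
  grind

theorem pivot_adj_right_iff (huv : G.Adj u v) {a : V} (hau : a ≠ u) (hav : a ≠ v) :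
    (pivot G u v).Adj a v ↔ G.Adj a u := by
  simp only [pivot, localComp_adj, G.adj_comm a u, G.adj_comm a v, ne_eq, huv, huv.symm,
    G.loopless.irrefl, huv.ne, hau.symm, hav.symm, not_false_eq_true, true_and, and_true,
    and_false, false_and]
  grind

end SimpleGraph

theorem pivot_unique_neighbor_general {V : Type*} (G : SimpleGraph V)
    (w x y : V) (Q : Set V)
    (hxy : x ≠ y) (hnadj : ¬ G.Adj x y) (hxw : G.Adj x w) (hyw : G.Adj y w)
    (hyQ : y ∉ Q)
    (hsame : ∀ z ∈ Q, (G.Adj x z ↔ G.Adj y z)) :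
    (pivot G y w).neighborSet x ∩ (Q ∪ {y}) = {y} := by
  ext z
  simp only [Set.mem_inter_iff, SimpleGraph.mem_neighborSet, Set.mem_union, Set.mem_singleton_iff]
  constructor
  · rintro ⟨hadj, hzQ | rfl⟩
    · exfalso
      by_cases hzw : z = w
      · subst hzw
        exact hnadj ((G.pivot_adj_right_iff hyw hxy hxw.ne).1 hadj)
      · have hzy : z ≠ y := fun h => hyQ (h ▸ hzQ)
        rw [G.pivot_adj_iff hyw hxy hxw.ne hzy hzw] at hadj
        simp [hnadj, hxw, hsame z hzQ] at hadj
    · rfl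
  · rintro rfl
    exact ⟨(G.pivot_adj_left_iff hyw hxy hxw.ne).2 hxw, Or.inr rfl⟩

/-- If `x, y` are distinct non-adjacent vertices both adjacent to `w`, with the same
neighborhoods in a set `Q` containing `w` but neither `x` nor `y`, then after pivoting
`yw` the only neighbor of `x` in `Q ∪ {y}` is `y`. -/
theorem pivot_unique_neighbor {V : Type*} [Fintype V] (G : SimpleGraph V)
    (w x y : V) (Q : Set V)
    (hxy : x ≠ y) (hnadj : ¬ G.Adj x y) (hxw : G.Adj x w) (hyw : G.Adj y w)
    (hwQ : w ∈ Q) (hxQ : x ∉ Q) (hyQ : y ∉ Q)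
    (hsame : ∀ z ∈ Q, (G.Adj x z ↔ G.Adj y z)) :
    (pivot G y w).neighborSet x ∩ (Q ∪ {y}) = {y} :=
  pivot_unique_neighbor_general G w x y Q hxy hnadj hxw hyw hyQ hsame
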